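/- arXiv:0907.4422 — 2 statements merged into one kernel-verified Lean document; each statement's English description precedes it below -/
import Mathlib

section
/- Let A and B be differential rings and ν : A → B a differential homomorphism such that B is differentially finitely generated over ν(A), and for each generator η there exist b_1, …, b_n ∈ A with b_k·η ∈ ν(A) for all k and {b_1, …, b_n} = A (the smallest radical differential ideal containing them is all of A). Then ν* : Spec^Δ B → V(ker ν) is a homeomorphism. -/
/-- An ideal is a differential ideal w.r.t. a family of derivation maps `d`. -/
def IsDiffIdeal {A : Type*} [CommRing A] {k : ℕ} (d : Fin k → A → A) (I : Ideal A) : Prop :=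
  ∀ i : Fin k, ∀ x ∈ I, d i x ∈ I

/-- The differential spectrum: prime differential ideals, with the Kolchin topology
(the subspace topology induced from the Zariski topology on `PrimeSpectrum`). -/
abbrev DiffSpec {A : Type*} [CommRing A] {k : ℕ} (d : Fin k → A → A) :=
  {p : PrimeSpectrum A // IsDiffIdeal d p.asIdeal}

/-- A Keigher ring: the radical of every differential ideal is differential. -/
def IsKeigher {A : Type*} [CommRing A] {k : ℕ} (d : Fin k → A → A) : Prop :=
  ∀ I : Ideal A, IsDiffIdeal d I → IsDiffIdeal d I.radical

/-- `radDiffGen d E` is the smallest radical differential ideal containing `E`. -/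
def radDiffGen {A : Type*} [CommRing A] {k : ℕ} (d : Fin k → A → A) (E : Set A) : Ideal A :=
  sInf {I : Ideal A | E ⊆ I ∧ I.IsRadical ∧ IsDiffIdeal d I}

/-! The hypotheses force every element of `B` to acquire, for each differential prime `p` of
`A`, a denominator outside `p`: the elements `x` with `ν(a) x ∈ ν(A)` for some `a ∉ p` form a
subring closed under the derivations (quotient rule) and containing `ν(A)`, and each generator
`η j` lies in it because the `b l` cannot all lie in the radical differential ideal `p`. Over
such a `p ⊇ ker ν` there is then exactly one prime of `B`, namely
`{x | ν(a) x = ν(c), a ∉ p, c ∈ p}`, and the same fractions `ν(a) x = ν(c)` express the basic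
open sets of `Spec^Δ B` through those of `Spec^Δ A`. -/

section

variable {A B : Type*} [CommRing A] [CommRing B] (ν : A →+* B)

def denomSubring (M : Submonoid A) : Subring B where
  carrier := {x | ∃ s ∈ M, ∃ c, ν s * x = ν c}
  one_mem' := ⟨1, M.one_mem, 1, by simp⟩
  zero_mem' := ⟨1, M.one_mem, 0, by simp⟩
  mul_mem' := by
    rintro x y ⟨s, hs, c, hx⟩ ⟨t, ht, d, hy⟩
    refine ⟨s * t, M.mul_mem hs ht, c * d, ?_⟩
    simp only [map_mul]
    linear_combination (ν t * y) * hx + ν c * hy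
  add_mem' := by
    rintro x y ⟨s, hs, c, hx⟩ ⟨t, ht, d, hy⟩
    refine ⟨s * t, M.mul_mem hs ht, t * c + s * d, ?_⟩
    simp only [map_mul, map_add]
    linear_combination ν t * hx + ν s * hy
  neg_mem' := by
    rintro x ⟨s, hs, c, hx⟩
    exact ⟨s, hs, -c, by simp [← hx]⟩

variable {ν}

theorem mem_denomSubring {M : Submonoid A} {x : B} :
    x ∈ denomSubring ν M ↔ ∃ s ∈ M, ∃ c, ν s * x = ν c :=
  Iff.rfl

theorem range_subset_denomSubring (M : Submonoid A) :
    Set.range ν ⊆ (denomSubring ν M : Set B) := by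
  rintro _ ⟨a, rfl⟩
  exact ⟨1, M.one_mem, a, by simp⟩

theorem map_mul_self_mul_derivation_eq {DA : Derivation ℤ A A} {DB : Derivation ℤ B B}
    (hD : ∀ a, ν (DA a) = DB (ν a)) {s c : A} {x : B} (h : ν s * x = ν c) :
    ν (s * s) * DB x = ν (s * DA c - DA s * c) := by
  have hderiv : ν s * DB x + x * DB (ν s) = DB (ν c) := by
    simpa [Derivation.leibniz] using congrArg DB h
  simp only [map_mul, map_sub, hD]
  linear_combination ν s * hderiv - DB (ν s) * h

theorem derivation_mem_denomSubring {DA : Derivation ℤ A A} {DB : Derivation ℤ B B}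
    (hD : ∀ a, ν (DA a) = DB (ν a)) {M : Submonoid A} {x : B} (hx : x ∈ denomSubring ν M) :
    DB x ∈ denomSubring ν M := by
  obtain ⟨s, hs, c, hsx⟩ := hx
  exact ⟨s * s, M.mul_mem hs hs, _, map_mul_self_mul_derivation_eq hD hsx⟩

theorem exists_mem_denomSubring_eq_top {M : Submonoid A} (h : denomSubring ν M = ⊤) (x : B) :
    ∃ s ∈ M, ∃ c, ν s * x = ν c :=
  mem_denomSubring.mp (h ▸ Subring.mem_top x)

theorem mem_of_map_eq_of_ker_le {p : Ideal A} (hker : RingHom.ker ν ≤ p) {a c : A}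
    (h : ν a = ν c) (hc : c ∈ p) : a ∈ p := by
  have hdiff : a - c ∈ p := hker (by rw [RingHom.mem_ker, map_sub, h, sub_self])
  simpa using p.add_mem hdiff hc

end

theorem IsDiffIdeal.comap {A B : Type*} [CommRing A] [CommRing B] {k : ℕ}
    {dA : Fin k → A → A} {dB : Fin k → B → B} {ν : A →+* B}
    (hν : ∀ i a, ν (dA i a) = dB i (ν a)) {I : Ideal B} (hI : IsDiffIdeal dB I) :
    IsDiffIdeal dA (I.comap ν) := by
  intro i a ha
  rw [Ideal.mem_comap, hν]
  exact hI i _ ha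

theorem exists_notMem_of_radDiffGen_eq_top {A : Type*} [CommRing A] {k : ℕ}
    {d : Fin k → A → A} {E : Set A} (hE : radDiffGen d E = ⊤) {p : Ideal A} (hp : p.IsPrime)
    (hpd : IsDiffIdeal d p) : ∃ e ∈ E, e ∉ p := by
  by_contra! hEp
  have : radDiffGen d E ≤ p := sInf_le ⟨hEp, hp.isRadical, hpd⟩
  exact hp.ne_top (top_le_iff.mp (hE ▸ this))

theorem denomSubring_primeCompl_eq_top {A B : Type*} [CommRing A] [CommRing B] {k : ℕ}
    {δA : Fin k → Derivation ℤ A A} {δB : Fin k → Derivation ℤ B B} {ν : A →+* B}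
    (hν : ∀ i a, ν (δA i a) = δB i (ν a)) {m : ℕ} {η : Fin m → B}
    (hgen : ∀ S : Subring B, (∀ x ∈ S, ∀ i, δB i x ∈ S) → Set.range ν ⊆ (S : Set B) →
      (∀ j, η j ∈ S) → S = ⊤)
    (hb : ∀ j : Fin m, ∃ (n : ℕ) (b : Fin n → A),
      (∀ l : Fin n, ν (b l) * η j ∈ Set.range ν) ∧
      radDiffGen (fun i => ⇑(δA i)) (Set.range b) = ⊤)
    (p : Ideal A) [hp : p.IsPrime] (hpd : IsDiffIdeal (fun i => ⇑(δA i)) p) :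
    denomSubring ν p.primeCompl = ⊤ := by
  refine hgen _ (fun x hx i => derivation_mem_denomSubring (hν i) hx)
    (range_subset_denomSubring _) fun j => ?_
  obtain ⟨n, b, hbη, hbtop⟩ := hb j
  obtain ⟨_, ⟨l, rfl⟩, hbl⟩ := exists_notMem_of_radDiffGen_eq_top hbtop hp hpd
  obtain ⟨c, hc⟩ := hbη l
  exact ⟨b l, hbl, c, hc.symm⟩

section LiftIdeal

variable {A B : Type*} [CommRing A] [CommRing B] {ν : A →+* B} {p : Ideal A} [hp : p.IsPrime]

variable (ν p) in
/-- The prime of `B` lying over `p`, when every element of `B` has a denominator outside `p`. -/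
def liftIdeal (hclear : denomSubring ν p.primeCompl = ⊤) : Ideal B where
  carrier := {x | ∃ a ∉ p, ∃ c ∈ p, ν a * x = ν c}
  zero_mem' := ⟨1, p.primeCompl.one_mem, 0, p.zero_mem, by simp⟩
  add_mem' := by
    rintro x y ⟨a, ha, c, hc, hx⟩ ⟨a', ha', c', hc', hy⟩
    refine ⟨a * a', p.primeCompl.mul_mem ha ha', a' * c + a * c',
      p.add_mem (p.mul_mem_left _ hc) (p.mul_mem_left _ hc'), ?_⟩
    simp only [map_mul, map_add]
    linear_combination ν a' * hx + ν a * hy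
  smul_mem' := by
    rintro r x ⟨a, ha, c, hc, hx⟩
    obtain ⟨s, hs, d, hr⟩ := exists_mem_denomSubring_eq_top hclear r
    refine ⟨a * s, p.primeCompl.mul_mem ha hs, d * c, p.mul_mem_left _ hc, ?_⟩
    simp only [smul_eq_mul, map_mul]
    linear_combination (ν a * x) * hr + ν d * hx

variable (hclear : denomSubring ν p.primeCompl = ⊤)

theorem liftIdeal_isPrime (hker : RingHom.ker ν ≤ p) : (liftIdeal ν p hclear).IsPrime := by
  refine ⟨(Ideal.ne_top_iff_one _).mpr ?_, ?_⟩
  · rintro ⟨a, ha, c, hc, h⟩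
    exact ha (mem_of_map_eq_of_ker_le hker (by simpa using h) hc)
  · rintro x y ⟨a, ha, c, hc, hxy⟩
    obtain ⟨s, hs, d, hx⟩ := exists_mem_denomSubring_eq_top hclear x
    obtain ⟨t, ht, e, hy⟩ := exists_mem_denomSubring_eq_top hclear y
    have hade : a * d * e ∈ p := by
      refine mem_of_map_eq_of_ker_le hker (c := s * t * c) ?_ (p.mul_mem_left _ hc)
      simp only [map_mul]
      linear_combination -(ν a * ν e) * hx - ν a * ν s * x * hy + ν s * ν t * hxy
    rcases hp.mem_or_mem hade with had | he
    · exact Or.inl ⟨s, hs, d, (hp.mem_or_mem had).resolve_left ha, hx⟩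
    · exact Or.inr ⟨t, ht, e, he, hy⟩

theorem isDiffIdeal_liftIdeal {k : ℕ} {δA : Fin k → Derivation ℤ A A}
    {δB : Fin k → Derivation ℤ B B} (hν : ∀ i a, ν (δA i a) = δB i (ν a))
    (hpd : IsDiffIdeal (fun i => ⇑(δA i)) p) :
    IsDiffIdeal (fun i => ⇑(δB i)) (liftIdeal ν p hclear) := by
  rintro i x ⟨a, ha, c, hc, hx⟩
  exact ⟨a * a, p.primeCompl.mul_mem ha ha, a * δA i c - δA i a * c,
    p.sub_mem (p.mul_mem_left _ (hpd i c hc)) (p.mul_mem_left _ hc),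
    map_mul_self_mul_derivation_eq (hν i) hx⟩

theorem comap_liftIdeal (hker : RingHom.ker ν ≤ p) : (liftIdeal ν p hclear).comap ν = p := by
  ext a
  refine ⟨fun ⟨s, hs, c, hc, h⟩ => ?_, fun ha => ⟨1, p.primeCompl.one_mem, a, ha, by simp⟩⟩
  have hsa : s * a ∈ p := mem_of_map_eq_of_ker_le hker (by simpa using h) hc
  exact (hp.mem_or_mem hsa).resolve_left hs

theorem eq_liftIdeal {q : Ideal B} [hq : q.IsPrime] (hqp : q.comap ν = p) :
    q = liftIdeal ν p hclear := by
  subst hqp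
  ext x
  constructor
  · intro hx
    obtain ⟨a, ha, c, h⟩ := exists_mem_denomSubring_eq_top hclear x
    exact ⟨a, ha, c, Ideal.mem_comap.mpr (h ▸ q.mul_mem_left _ hx), h⟩
  · rintro ⟨a, ha, c, hc, h⟩
    exact (hq.mem_or_mem (h ▸ Ideal.mem_comap.mp hc)).resolve_left ha

theorem notMem_liftIdeal_iff (hker : RingHom.ker ν ≤ p) (x : B) :
    x ∉ liftIdeal ν p hclear ↔ ∃ a c : A, ν a * x = ν c ∧ a * c ∉ p := by
  constructor
  · intro hx
    obtain ⟨a, ha, c, h⟩ := exists_mem_denomSubring_eq_top hclear x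
    exact ⟨a, c, h, fun hac => (hp.mem_or_mem hac).elim ha fun hc => hx ⟨a, ha, c, hc, h⟩⟩
  · rintro ⟨a, c, h, hac⟩ hx
    have hc : c ∈ (liftIdeal ν p hclear).comap ν :=
      Ideal.mem_comap.mpr (h ▸ Ideal.mul_mem_left _ _ hx)
    exact hac (p.mul_mem_left a (comap_liftIdeal hclear hker ▸ hc))

end LiftIdeal

section DiffSpec

variable {A B : Type*} [CommRing A] [CommRing B] {k : ℕ}
  {δA : Fin k → Derivation ℤ A A} {δB : Fin k → Derivation ℤ B B} {ν : A →+* B}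

def diffSpecComap (hν : ∀ i a, ν (δA i a) = δB i (ν a)) :
    C(DiffSpec (fun i => ⇑(δB i)),
      {p : DiffSpec (fun i => ⇑(δA i)) // RingHom.ker ν ≤ p.1.asIdeal}) where
  toFun q := ⟨⟨PrimeSpectrum.comap ν q.1, q.2.comap hν⟩, Ideal.ker_le_comap ν⟩
  continuous_toFun :=
    (((PrimeSpectrum.continuous_comap ν).comp continuous_subtype_val).subtype_mk _).subtype_mk _

def diffSpecHomeomorph (hν : ∀ i a, ν (δA i a) = δB i (ν a))
    (hclear : ∀ p : DiffSpec (fun i => ⇑(δA i)), RingHom.ker ν ≤ p.1.asIdeal →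
      denomSubring ν p.1.asIdeal.primeCompl = ⊤) :
    DiffSpec (fun i => ⇑(δB i)) ≃ₜ
      {p : DiffSpec (fun i => ⇑(δA i)) // RingHom.ker ν ≤ p.1.asIdeal} where
  toFun := diffSpecComap hν
  invFun P := ⟨⟨liftIdeal ν _ (hclear P.1 P.2), liftIdeal_isPrime (hclear P.1 P.2) P.2⟩,
    isDiffIdeal_liftIdeal (hclear P.1 P.2) hν P.1.2⟩
  left_inv q :=
    Subtype.ext (PrimeSpectrum.ext (eq_liftIdeal (hclear _ (Ideal.ker_le_comap ν)) rfl).symm)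
  right_inv P :=
    Subtype.ext (Subtype.ext (PrimeSpectrum.ext (comap_liftIdeal (hclear P.1 P.2) P.2)))
  continuous_toFun := (diffSpecComap hν).continuous
  continuous_invFun := by
    refine Continuous.subtype_mk ?_ _
    rw [PrimeSpectrum.isTopologicalBasis_basic_opens.continuous_iff]
    rintro _ ⟨x, rfl⟩
    convert isOpen_iUnion fun ac : A × A => isOpen_iUnion fun (_ : ν ac.1 * x = ν ac.2) =>
      (PrimeSpectrum.basicOpen (ac.1 * ac.2)).isOpen.preimage
        (continuous_subtype_val.comp continuous_subtype_val) using 1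
    ext P
    simp [notMem_liftIdeal_iff (hclear P.1 P.2) P.2]

end DiffSpec

theorem stmt7_general {A B : Type*} [CommRing A] [CommRing B] {k : ℕ}
    (δA : Fin k → Derivation ℤ A A) (δB : Fin k → Derivation ℤ B B)
    (ν : A →+* B) (hν : ∀ i a, ν (δA i a) = δB i (ν a))
    (m : ℕ) (η : Fin m → B)
    (hgen : ∀ S : Subring B, (∀ x ∈ S, ∀ i, δB i x ∈ S) → Set.range ν ⊆ (S : Set B) →
      (∀ j, η j ∈ S) → S = ⊤)
    (hb : ∀ j : Fin m, ∃ (n : ℕ) (b : Fin n → A),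
      (∀ l : Fin n, ν (b l) * η j ∈ Set.range ν) ∧
      radDiffGen (fun i => ⇑(δA i)) (Set.range b) = ⊤) :
    ∃ h : DiffSpec (fun i => ⇑(δB i)) ≃ₜ
        {p : DiffSpec (fun i => ⇑(δA i)) // RingHom.ker ν ≤ p.1.asIdeal},
      ∀ q, (h q).1.1.asIdeal = Ideal.comap ν q.1.asIdeal :=
  ⟨diffSpecHomeomorph hν fun p _ => denomSubring_primeCompl_eq_top hν hgen hb _ p.2,
    fun _ => rfl⟩

/-- If `B` is differentially finitely generated over `ν(A)` by `η 1, …, η m`, and for each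
generator `η j` there are `b 1, …, b n ∈ A` with `ν(b k) * η j ∈ ν(A)` and with the smallest
radical differential ideal generated by the `b k` equal to `A`, then
`ν* : Spec^Δ B → V(ker ν)` is a homeomorphism. -/
theorem stmt7 {A B : Type*} [CommRing A] [CommRing B] {k : ℕ}
    (δA : Fin k → Derivation ℤ A A) (δB : Fin k → Derivation ℤ B B)
    (hcommA : ∀ i j a, δA i (δA j a) = δA j (δA i a))
    (hcommB : ∀ i j b, δB i (δB j b) = δB j (δB i b))
    (ν : A →+* B) (hν : ∀ i a, ν (δA i a) = δB i (ν a))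
    (m : ℕ) (η : Fin m → B)
    (hgen : ∀ S : Subring B, (∀ x ∈ S, ∀ i, δB i x ∈ S) → Set.range ν ⊆ (S : Set B) →
      (∀ j, η j ∈ S) → S = ⊤)
    (hb : ∀ j : Fin m, ∃ (n : ℕ) (b : Fin n → A),
      (∀ l : Fin n, ν (b l) * η j ∈ Set.range ν) ∧
      radDiffGen (fun i => ⇑(δA i)) (Set.range b) = ⊤) :
    ∃ h : DiffSpec (fun i => ⇑(δB i)) ≃ₜ
        {p : DiffSpec (fun i => ⇑(δA i)) // RingHom.ker ν ≤ p.1.asIdeal},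
      ∀ q, (h q).1.1.asIdeal = Ideal.comap ν q.1.asIdeal :=
  stmt7_general δA δB ν hν m η hgen hb
end

section
/- Let A be a differential ring, X = Spec^Δ A, and O' the sheaf on X whose sections over an open U are functions f assigning to each p ∈ U an element of the residue field K(p) = Frac(A/p), such that f is locally of the form a/b with a, b ∈ A and b ∉ q for all q in the neighborhood. Then for every η ∈ O'(X) there exist a_1, …, a_m, b_1, …, b_m ∈ A such that b_i·η = ι'(a_i) for each i (where ι' : A → O'(X) is the canonical map) and the smallest radical differential ideal of A containing {b_1, …, b_m} is all of A. -/
/-- The canonical map from `A` to the residue field `K(p) = Frac(A/p)`. -/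
noncomputable def resMap {A : Type*} [CommRing A] {k : ℕ} {d : Fin k → A → A}
    (p : DiffSpec d) : A →+* FractionRing (A ⧸ p.1.asIdeal) :=
  (algebraMap (A ⧸ p.1.asIdeal) (FractionRing (A ⧸ p.1.asIdeal))).comp
    (Ideal.Quotient.mk p.1.asIdeal)

/-- A function `X → ⊔_p K(p)` is regular if it is locally a quotient `a/b` with `b`
outside every prime differential ideal of the neighborhood. -/
def RegularRes {A : Type*} [CommRing A] {k : ℕ} {d : Fin k → A → A}
    (f : ∀ p : DiffSpec d, FractionRing (A ⧸ p.1.asIdeal)) : Prop :=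
  ∀ p : DiffSpec d, ∃ U : Set (DiffSpec d), IsOpen U ∧ p ∈ U ∧ ∃ a b : A,
    (∀ q ∈ U, b ∉ q.1.asIdeal) ∧ ∀ q ∈ U, f q * resMap q b = resMap q a

open Set

section RadDiffGen

variable {A : Type*} [CommRing A] {k : ℕ} {d : Fin k → A → A}

theorem subset_radDiffGen (E : Set A) : E ⊆ radDiffGen d E :=
  fun _ hx => Submodule.mem_sInf.2 fun _ hI => hI.1 hx

theorem radDiffGen_le {E : Set A} {I : Ideal A} (hE : E ⊆ I) (hrad : I.IsRadical)
    (hdiff : IsDiffIdeal d I) : radDiffGen d E ≤ I :=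
  sInf_le ⟨hE, hrad, hdiff⟩

theorem radDiffGen_isRadical (E : Set A) : (radDiffGen d E).IsRadical :=
  fun _ ⟨n, hn⟩ => Submodule.mem_sInf.2 fun I hI => hI.2.1 ⟨n, Submodule.mem_sInf.1 hn I hI⟩

theorem radDiffGen_isDiffIdeal (E : Set A) : IsDiffIdeal d (radDiffGen d E) :=
  fun i _ hx => Submodule.mem_sInf.2 fun I hI => hI.2.2 i _ (Submodule.mem_sInf.1 hx I hI)

theorem radDiffGen_mono {E F : Set A} (h : E ⊆ F) : radDiffGen d E ≤ radDiffGen d F :=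
  radDiffGen_le (h.trans (subset_radDiffGen F)) (radDiffGen_isRadical F)
    (radDiffGen_isDiffIdeal F)

theorem Ideal.IsRadical.sSup_of_directedOn {S : Set (Ideal A)} (hS : S.Nonempty)
    (hdir : DirectedOn (· ≤ ·) S) (h : ∀ I ∈ S, I.IsRadical) : (sSup S).IsRadical := by
  rintro x ⟨n, hn⟩
  obtain ⟨I, hI, hxI⟩ := (Submodule.mem_sSup_of_directed hS hdir).1 hn
  exact le_sSup hI (h I hI ⟨n, hxI⟩)

theorem IsDiffIdeal.sSup_of_directedOn {S : Set (Ideal A)} (hS : S.Nonempty)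
    (hdir : DirectedOn (· ≤ ·) S) (h : ∀ I ∈ S, IsDiffIdeal d I) : IsDiffIdeal d (sSup S) := by
  intro i x hx
  obtain ⟨I, hI, hxI⟩ := (Submodule.mem_sSup_of_directed hS hdir).1 hx
  exact le_sSup hI (h I hI i x hxI)

theorem exists_finite_subset_of_mem_radDiffGen {E : Set A} {x : A} (hx : x ∈ radDiffGen d E) :
    ∃ F ⊆ E, F.Finite ∧ x ∈ radDiffGen d F := by
  set S := radDiffGen d '' {F | F ⊆ E ∧ F.Finite}
  have hS : S.Nonempty := ⟨_, ∅, ⟨empty_subset E, finite_empty⟩, rfl⟩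
  have hdir : DirectedOn (· ≤ ·) S := by
    rintro _ ⟨F, hF, rfl⟩ _ ⟨G, hG, rfl⟩
    exact ⟨_, ⟨F ∪ G, ⟨union_subset hF.1 hG.1, hF.2.union hG.2⟩, rfl⟩,
      radDiffGen_mono subset_union_left, radDiffGen_mono subset_union_right⟩
  have hES : E ⊆ ↑(sSup S) := fun y hy =>
    have hyS : radDiffGen d {y} ∈ S := ⟨{y}, ⟨singleton_subset_iff.2 hy, finite_singleton y⟩, rfl⟩
    le_sSup hyS (subset_radDiffGen {y} (mem_singleton y))
  have hle : radDiffGen d E ≤ sSup S :=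
    radDiffGen_le hES
      (Ideal.IsRadical.sSup_of_directedOn hS hdir fun _ ⟨_, _, hI⟩ => hI ▸ radDiffGen_isRadical _)
      (IsDiffIdeal.sSup_of_directedOn hS hdir fun _ ⟨_, _, hI⟩ => hI ▸ radDiffGen_isDiffIdeal _)
  obtain ⟨_, ⟨F, hF, rfl⟩, hxF⟩ := (Submodule.mem_sSup_of_directed hS hdir).1 (hle hx)
  exact ⟨F, hF.1, hF.2, hxF⟩

end RadDiffGen

section RegularRes

variable {A : Type*} [CommRing A] {k : ℕ} {d : Fin k → A → A}

theorem resMap_eq_zero_of_mem {p : DiffSpec d} {g : A} (hg : g ∈ p.1.asIdeal) :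
    resMap p g = 0 := by
  simp [resMap, Ideal.Quotient.eq_zero_iff_mem.2 hg]

theorem DiffSpec.exists_notMem_forall_mem_of_isOpen {U : Set (DiffSpec d)} (hU : IsOpen U)
    {p : DiffSpec d} (hp : p ∈ U) :
    ∃ g ∉ p.1.asIdeal, ∀ q : DiffSpec d, g ∉ q.1.asIdeal → q ∈ U := by
  obtain ⟨V, hV, rfl⟩ := isOpen_induced_iff.1 hU
  obtain ⟨_, ⟨g, rfl⟩, hpg, hgV⟩ :=
    PrimeSpectrum.isTopologicalBasis_basic_opens.exists_subset_of_mem_open hp hV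
  exact ⟨g, hpg, fun _ hq => hgV hq⟩

theorem RegularRes.exists_mul_eq {f : ∀ p : DiffSpec d, FractionRing (A ⧸ p.1.asIdeal)}
    (hf : RegularRes f) (p : DiffSpec d) :
    ∃ a b : A, b ∉ p.1.asIdeal ∧ ∀ q : DiffSpec d, resMap q b * f q = resMap q a := by
  obtain ⟨U, hU, hpU, a, b, hb, hab⟩ := hf p
  obtain ⟨g, hgp, hgU⟩ := DiffSpec.exists_notMem_forall_mem_of_isOpen hU hpU
  refine ⟨g * a, g * b, p.1.isPrime.mul_notMem hgp (hb p hpU), fun q => ?_⟩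
  by_cases hgq : g ∈ q.1.asIdeal
  · simp [resMap_eq_zero_of_mem hgq]
  · rw [map_mul, map_mul, ← hab q (hgU q hgq)]
    ring

end RegularRes

section Derivations

variable {A : Type*} [CommRing A]

theorem Ideal.IsRadical.colon_singleton {I : Ideal A} (hI : I.IsRadical) (t : A) :
    (I.colon {t}).IsRadical := by
  rintro x ⟨n, hn⟩
  rw [Submodule.mem_colon_singleton, smul_eq_mul] at hn ⊢
  have : (x * t) ^ (n + 1) = x ^ n * t * (x * t ^ n) := by ring
  exact hI ⟨n + 1, this ▸ I.mul_mem_right _ hn⟩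

variable {R : Type*} [CommSemiring R] [Algebra R A]

theorem mul_derivation_mem_of_mul_mem (D : Derivation R A A) {I : Ideal A} (hI : I.IsRadical)
    (hD : ∀ x ∈ I, D x ∈ I) {a b : A} (hab : a * b ∈ I) : a * D b ∈ I := by
  have hsq : (a * D b) ^ 2 = a * D b * D (a * b) - a * b * (D a * D b) := by
    rw [D.leibniz, smul_eq_mul, smul_eq_mul]
    ring
  exact hI ⟨2, hsq ▸ sub_mem (I.mul_mem_left _ (hD _ hab)) (I.mul_mem_right _ hab)⟩

variable {k : ℕ} (δ : Fin k → Derivation R A A)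

theorem IsDiffIdeal.colon_singleton {I : Ideal A} (hI : I.IsRadical)
    (hdiff : IsDiffIdeal (fun i => ⇑(δ i)) I) (t : A) :
    IsDiffIdeal (fun i => ⇑(δ i)) (I.colon {t}) := by
  intro i x hx
  rw [Submodule.mem_colon_singleton, smul_eq_mul, mul_comm] at hx ⊢
  exact mul_derivation_mem_of_mul_mem (δ i) hI (hdiff i) hx

theorem radDiffGen_le_colon_singleton {M : Ideal A} (hM : M.IsRadical)
    (hdiff : IsDiffIdeal (fun i => ⇑(δ i)) M) {E : Set A} {t : A} (hE : ∀ x ∈ E, x * t ∈ M) :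
    radDiffGen (fun i => ⇑(δ i)) E ≤ M.colon {t} :=
  radDiffGen_le (fun x hx => by simpa using hE x hx) (hM.colon_singleton t)
    (IsDiffIdeal.colon_singleton δ hM hdiff t)

theorem mul_mem_of_mem_radDiffGen_insert {M : Ideal A} (hM : M.IsRadical)
    (hdiff : IsDiffIdeal (fun i => ⇑(δ i)) M) {a b x y : A} (hab : a * b ∈ M)
    (hx : x ∈ radDiffGen (fun i => ⇑(δ i)) (insert a M))
    (hy : y ∈ radDiffGen (fun i => ⇑(δ i)) (insert b M)) : x * y ∈ M := by
  have hxt : ∀ t ∈ insert b (M : Set A), t * x ∈ M := by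
    intro t ht
    have hst : ∀ s ∈ insert a (M : Set A), s * t ∈ M := by
      rintro s (rfl | hs)
      · rcases ht with rfl | ht
        exacts [hab, M.mul_mem_left _ ht]
      · exact M.mul_mem_right _ hs
    simpa [mul_comm] using radDiffGen_le_colon_singleton δ hM hdiff hst hx
  simpa [mul_comm] using radDiffGen_le_colon_singleton δ hM hdiff hxt hy

theorem isPrime_of_maximal_isRadical_isDiffIdeal {M : Ideal A}
    (hM : Maximal (fun J : Ideal A => J.IsRadical ∧ IsDiffIdeal (fun i => ⇑(δ i)) J ∧ J ≠ ⊤) M) :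
    M.IsPrime := by
  obtain ⟨⟨hrad, hdiff, hne⟩, hmax⟩ := hM
  have one_mem : ∀ c ∉ M, (1 : A) ∈ radDiffGen (fun i => ⇑(δ i)) (insert c M) := by
    intro c hc
    by_contra h1
    have hMle : M ≤ radDiffGen (fun i => ⇑(δ i)) (insert c M) :=
      fun z hz => subset_radDiffGen _ (mem_insert_of_mem c hz)
    exact hc <| hmax ⟨radDiffGen_isRadical _, radDiffGen_isDiffIdeal _,
      (Ideal.ne_top_iff_one _).2 h1⟩ hMle (subset_radDiffGen _ (mem_insert c _))
  refine ⟨hne, fun {a b} hab => ?_⟩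
  by_contra! h
  exact hne <| (Ideal.eq_top_iff_one M).2 <| one_mul (1 : A) ▸
    mul_mem_of_mem_radDiffGen_insert δ hrad hdiff hab (one_mem a h.1) (one_mem b h.2)

theorem exists_isPrime_isDiffIdeal_le {I : Ideal A} (hrad : I.IsRadical)
    (hdiff : IsDiffIdeal (fun i => ⇑(δ i)) I) (hI : I ≠ ⊤) :
    ∃ P : Ideal A, P.IsPrime ∧ IsDiffIdeal (fun i => ⇑(δ i)) P ∧ I ≤ P := by
  let S := {J : Ideal A | J.IsRadical ∧ IsDiffIdeal (fun i => ⇑(δ i)) J ∧ J ≠ ⊤}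
  have hchain : ∀ c ⊆ S, IsChain (· ≤ ·) c → ∀ J ∈ c, ∃ ub ∈ S, ∀ z ∈ c, z ≤ ub := by
    intro c hcS hc J hJ
    have hne : c.Nonempty := ⟨J, hJ⟩
    refine ⟨sSup c, ⟨Ideal.IsRadical.sSup_of_directedOn hne hc.directedOn fun I hI => (hcS hI).1,
      IsDiffIdeal.sSup_of_directedOn hne hc.directedOn fun I hI => (hcS hI).2.1, ?_⟩,
      fun _ => le_sSup⟩
    rw [Ne, Ideal.eq_top_iff_one, Submodule.mem_sSup_of_directed hne hc.directedOn]
    rintro ⟨I, hI, h1⟩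
    exact (hcS hI).2.2 ((Ideal.eq_top_iff_one I).2 h1)
  obtain ⟨M, hIM, hM⟩ := zorn_le_nonempty₀ S hchain I ⟨hrad, hdiff, hI⟩
  exact ⟨M, isPrime_of_maximal_isRadical_isDiffIdeal δ hM, hM.prop.2.1, hIM⟩

theorem radDiffGen_eq_top_of_forall_exists_notMem {E : Set A}
    (h : ∀ p : DiffSpec (fun i => ⇑(δ i)), ∃ x ∈ E, x ∉ p.1.asIdeal) :
    radDiffGen (fun i => ⇑(δ i)) E = ⊤ := by
  by_contra hne
  obtain ⟨P, hP, hPdiff, hle⟩ :=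
    exists_isPrime_isDiffIdeal_le δ (radDiffGen_isRadical E) (radDiffGen_isDiffIdeal E) hne
  obtain ⟨x, hxE, hx⟩ := h ⟨⟨P, hP⟩, hPdiff⟩
  exact hx (hle (subset_radDiffGen E hxE))

end Derivations

theorem stmt10_general {A : Type*} [CommRing A] {k : ℕ} (δ : Fin k → Derivation ℤ A A)
    (η : ∀ p : DiffSpec (fun i => ⇑(δ i)), FractionRing (A ⧸ p.1.asIdeal))
    (hreg : RegularRes η) :
    ∃ (m : ℕ) (a b : Fin m → A),
      (∀ i : Fin m, ∀ p : DiffSpec (fun i => ⇑(δ i)), resMap p (b i) * η p = resMap p (a i)) ∧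
      radDiffGen (fun i => ⇑(δ i)) (Set.range b) = ⊤ := by
  choose a b hbp hab using hreg.exists_mul_eq
  have htop : radDiffGen (fun i => ⇑(δ i)) (range b) = ⊤ :=
    radDiffGen_eq_top_of_forall_exists_notMem δ fun p => ⟨b p, mem_range_self p, hbp p⟩
  obtain ⟨F, hFb, hF, hF1⟩ :=
    exists_finite_subset_of_mem_radDiffGen ((Ideal.eq_top_iff_one _).1 htop)
  obtain ⟨m, e, rfl⟩ := hF.fin_embedding
  choose p hp using fun i => hFb (mem_range_self i)
  refine ⟨m, fun i => a (p i), fun i => b (p i), fun i => hab (p i), ?_⟩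
  rw [funext hp, Ideal.eq_top_iff_one]
  exact hF1

/-- Every global section `η` of the residue-field sheaf `O'` admits `a i, b i ∈ A` with
`b i · η = ι'(a i)` and with the smallest radical differential ideal containing the `b i`
equal to all of `A`. -/
theorem stmt10 {A : Type*} [CommRing A] {k : ℕ} (δ : Fin k → Derivation ℤ A A)
    (hcomm : ∀ i j a, δ i (δ j a) = δ j (δ i a))
    (η : ∀ p : DiffSpec (fun i => ⇑(δ i)), FractionRing (A ⧸ p.1.asIdeal))
    (hreg : RegularRes η) :
    ∃ (m : ℕ) (a b : Fin m → A),
      (∀ i : Fin m, ∀ p : DiffSpec (fun i => ⇑(δ i)), resMap p (b i) * η p = resMap p (a i)) ∧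
      radDiffGen (fun i => ⇑(δ i)) (Set.range b) = ⊤ :=
  stmt10_general δ η hreg
end
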